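/- For every state s ∈ S \ Bad and every action a legal at s, Val(s) ≥ ∑_{s'} (P s a)(s')·Val(s'). -/

import Mathlib

open scoped ENNReal NNReal Classical
open Filter

universe u v

variable {S : Type u} {A : Type v}

/-- A finite MDP: `P s a = some d` means action `a` is legal at `s` and `d` is a
probability distribution on `S`; every state has at least one legal action. -/
structure MDP (S : Type u) (A : Type v) [Fintype S] [Fintype A] where
  P : S → A → Option (S → NNReal)
  sum_one : ∀ s a d, P s a = some d → (∑ s', d s') = 1
  exists_legal : ∀ s, ∃ a, (P s a).isSome

/-- Last state of an alternating path starting at `s` with steps `steps`. -/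
def lastState : S → List (A × S) → S
  | s, [] => s
  | _, (_, s') :: rest => lastState s' rest

/-- A finite path: a start state together with a list of (action, next-state) steps. -/
structure FPath (S : Type u) (A : Type v) where
  start : S
  steps : List (A × S)

namespace FPath

def last (ρ : FPath S A) : S := lastState ρ.start ρ.steps

def states (ρ : FPath S A) : List S := ρ.start :: ρ.steps.map Prod.snd

def length (ρ : FPath S A) : ℕ := ρ.steps.length

end FPath

/-- A (raw) strategy: maps each finite path (start state + steps) to a distribution on actions. -/
def Strat (S : Type u) (A : Type v) := S → List (A × S) → A → ℝ≥0∞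

/-- Shifted strategy `σ_ρ` for `ρ = (s₀, pre)`: `σ_ρ(ρ') = σ(ρ·ρ')`. -/
def shiftStrat (σ : Strat S A) (s₀ : S) (pre : List (A × S)) : Strat S A :=
  fun _ steps a => σ s₀ (pre ++ steps) a

/-- Generic cylinder weight (product of strategy- and transition-probabilities along the
steps), relative to a transition kernel `p`. The accumulator `pre` is the path-prefix so far. -/
noncomputable def wtP (p : S → A → S → ℝ≥0∞) (σ : Strat S A) (s₀ : S) :
    List (A × S) → List (A × S) → ℝ≥0∞
  | _, [] => 1
  | pre, (a, s') :: rest =>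
      σ s₀ pre a * p (lastState s₀ pre) a s' * wtP p σ s₀ (pre ++ [(a, s')]) rest
  termination_by pre l => l.length

/-- Generic cylinder probability of path `ρ` from start state `s`, kernel `p`. -/
noncomputable def cylProbP (p : S → A → S → ℝ≥0∞) (σ : Strat S A) (s : S) (ρ : FPath S A) :
    ℝ≥0∞ :=
  if ρ.start = s then wtP p σ ρ.start [] ρ.steps else 0

namespace MDP

variable [Fintype S] [Fintype A]

def legal (M : MDP S A) (s : S) (a : A) : Prop := (M.P s a).isSome

noncomputable def prob (M : MDP S A) (s : S) (a : A) (s' : S) : ℝ≥0∞ :=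
  (M.P s a).elim 0 fun d => (d s' : ℝ≥0∞)

/-- `ρ` is a finite path of `M` from `s`: every action legal, every transition of
positive probability. -/
def IsPathFrom (M : MDP S A) : S → List (A × S) → Prop
  | _, [] => True
  | s, (a, s') :: rest => M.legal s a ∧ 0 < M.prob s a s' ∧ M.IsPathFrom s' rest

def IsPath (M : MDP S A) (ρ : FPath S A) : Prop := M.IsPathFrom ρ.start ρ.steps

/-- `σ` is a strategy: at every finite path it gives a probability distribution on actions
supported on actions legal at the last state. -/
def IsStrategy (M : MDP S A) (σ : Strat S A) : Prop :=
  ∀ s steps, M.IsPathFrom s steps →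
    (∑ a, σ s steps a) = 1 ∧ ∀ a, 0 < σ s steps a → M.legal (lastState s steps) a

/-- Cylinder probability `P_{σ,s}(ρ)` in `M`. -/
noncomputable def cylProb (M : MDP S A) (σ : Strat S A) (s : S) (ρ : FPath S A) : ℝ≥0∞ :=
  cylProbP M.prob σ s ρ

/-- `T` is a set of sink states: each `t ∈ T` has exactly one legal action, leading back
to `t` with probability `1`. -/
def SinkSet (M : MDP S A) (T : Set S) : Prop :=
  ∀ t ∈ T, (∃! a, M.legal t a) ∧ ∀ a, M.legal t a → M.prob t a t = 1

/-- Generic pruned finite-path predicate: all states have positive value `v` and every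
step uses an `opt` state-action pair with positive transition probability in `M`. -/
def IsPathFromPruned (M : MDP S A) (v : S → ℝ≥0∞) (opt : S → A → Prop) :
    S → List (A × S) → Prop
  | s, [] => 0 < v s
  | s, (a, s') :: rest =>
      0 < v s ∧ opt s a ∧ 0 < M.prob s a s' ∧ M.IsPathFromPruned v opt s' rest

/-! ### Reachability -/

/-- `ρ` is a `T`-hitting path: its last state lies in `T` and no other state does. -/
def HitsFirst (T : Set S) (ρ : FPath S A) : Prop :=
  ρ.last ∈ T ∧ ∀ x ∈ ρ.states.dropLast, x ∉ T

/-- `Pr_{σ,s}(◊T)`: sum over `T`-hitting paths starting at `s` of their cylinder probabilities. -/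
noncomputable def prReach (M : MDP S A) (σ : Strat S A) (s : S) (T : Set S) : ℝ≥0∞ :=
  ∑' ρ : {ρ : FPath S A // M.IsPath ρ ∧ HitsFirst T ρ ∧ ρ.start = s}, M.cylProb σ s ρ.1

/-- `Val(s)` for reachability: supremum over strategies of `Pr_{σ,s}(◊T)`. -/
noncomputable def reachVal (M : MDP S A) (T : Set S) (s : S) : ℝ≥0∞ :=
  ⨆ (σ : Strat S A) (_ : M.IsStrategy σ), M.prReach σ s T

/-- `(s,a) ∈ Opt` for reachability. -/
def OptR (M : MDP S A) (T : Set S) (s : S) (a : A) : Prop :=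
  M.legal s a ∧ M.reachVal T s = ∑ s', M.prob s a s' * M.reachVal T s'

/-- `σ ∈ Σ^Opt` for reachability. -/
def SigmaOptR (M : MDP S A) (T : Set S) (σ : Strat S A) : Prop :=
  ∀ s steps, M.IsPathFrom s steps → ∀ a, 0 < σ s steps a → M.OptR T (lastState s steps) a

/-- Transition probabilities of the pruned MDP `M'` for reachability. -/
noncomputable def probR' (M : MDP S A) (T : Set S) (s : S) (a : A) (s' : S) : ℝ≥0∞ :=
  if M.OptR T s a ∧ 0 < M.reachVal T s then
    M.prob s a s' * M.reachVal T s' / M.reachVal T s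
  else 0

/-- `ρ` is a finite path of the pruned MDP `M'` (reachability version). -/
def IsPathR' (M : MDP S A) (T : Set S) (ρ : FPath S A) : Prop :=
  M.IsPathFromPruned (M.reachVal T) (M.OptR T) ρ.start ρ.steps

/-- Cylinder probability `P'_{σ,s}(ρ)` in the pruned MDP `M'` (reachability version). -/
noncomputable def cylProbR' (M : MDP S A) (T : Set S) (σ : Strat S A) (s : S) (ρ : FPath S A) :
    ℝ≥0∞ :=
  cylProbP (M.probR' T) σ s ρ

/-- `Pr'_{σ,s}(◊T)` in the pruned MDP `M'`. -/
noncomputable def prReach' (M : MDP S A) (σ : Strat S A) (s : S) (T : Set S) : ℝ≥0∞ :=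
  ∑' ρ : {ρ : FPath S A // M.IsPathR' T ρ ∧ HitsFirst T ρ ∧ ρ.start = s},
    M.cylProbR' T σ s ρ.1

/-- Probability of hitting `T` for the first time in exactly `r` steps, in `M`. -/
noncomputable def hitLenProb (M : MDP S A) (σ : Strat S A) (s : S) (T : Set S) (r : ℕ) :
    ℝ≥0∞ :=
  ∑' ρ : {ρ : FPath S A // M.IsPath ρ ∧ HitsFirst T ρ ∧ ρ.start = s ∧ ρ.length = r},
    M.cylProb σ s ρ.1

/-- Probability of hitting `T` for the first time in exactly `r` steps, in `M'`. -/
noncomputable def hitLenProb' (M : MDP S A) (σ : Strat S A) (s : S) (T : Set S) (r : ℕ) :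
    ℝ≥0∞ :=
  ∑' ρ : {ρ : FPath S A // M.IsPathR' T ρ ∧ HitsFirst T ρ ∧ ρ.start = s ∧ ρ.length = r},
    M.cylProbR' T σ s ρ.1

/-- Conditional expected length to target `E_{σ,s}(len_T | ◊T)`. -/
noncomputable def condExpLen (M : MDP S A) (σ : Strat S A) (s : S) (T : Set S) : ℝ≥0∞ :=
  ∑' r : ℕ, (r : ℝ≥0∞) * M.hitLenProb σ s T r / M.prReach σ s T

/-- Expected length to target in `M'`, `E'_{σ,s}(len_T)`; `∞` unless `Pr'_{σ,s}(◊T) = 1`. -/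
noncomputable def expLen' (M : MDP S A) (σ : Strat S A) (s : S) (T : Set S) : ℝ≥0∞ :=
  if M.prReach' σ s T = 1 then ∑' r : ℕ, (r : ℝ≥0∞) * M.hitLenProb' σ s T r else ⊤

/-! ### Safety -/

/-- `Safe_n(σ,s)`: probability of the paths of length `n` from `s` avoiding `Bad`. -/
noncomputable def safeN (M : MDP S A) (σ : Strat S A) (s : S) (Bad : Set S) (n : ℕ) : ℝ≥0∞ :=
  ∑' ρ : {ρ : FPath S A //
      M.IsPath ρ ∧ ρ.start = s ∧ ρ.length = n ∧ ∀ x ∈ ρ.states, x ∉ Bad},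
    M.cylProb σ s ρ.1

/-- `Pr_{σ,s}(□¬Bad) := ⨅ n, Safe_n(σ,s)`. -/
noncomputable def prSafe (M : MDP S A) (σ : Strat S A) (s : S) (Bad : Set S) : ℝ≥0∞ :=
  ⨅ n : ℕ, M.safeN σ s Bad n

/-- `Val(s)` for safety: supremum over strategies of `Pr_{σ,s}(□¬Bad)`. -/
noncomputable def safeVal (M : MDP S A) (Bad : Set S) (s : S) : ℝ≥0∞ :=
  ⨆ (σ : Strat S A) (_ : M.IsStrategy σ), M.prSafe σ s Bad

/-- `(s,a) ∈ Opt` for safety. -/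
def OptS (M : MDP S A) (Bad : Set S) (s : S) (a : A) : Prop :=
  M.legal s a ∧ M.safeVal Bad s = ∑ s', M.prob s a s' * M.safeVal Bad s'

/-- `σ ∈ Σ^Opt` for safety. -/
def SigmaOptS (M : MDP S A) (Bad : Set S) (σ : Strat S A) : Prop :=
  ∀ s steps, M.IsPathFrom s steps → ∀ a, 0 < σ s steps a → M.OptS Bad (lastState s steps) a

/-- `UPreⁱ(Bad)`. -/
def UPre (M : MDP S A) (Bad : Set S) : ℕ → Set S
  | 0 => Bad
  | i + 1 => {s | ∀ a, M.legal s a → ∃ s' ∈ M.UPre Bad i, 0 < M.prob s a s'}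

/-- `Good := S \ UPre*(Bad)`. -/
def GoodSet (M : MDP S A) (Bad : Set S) : Set S := (⋃ i, M.UPre Bad i)ᶜ

/-- `V := S \ (Good ∪ Bad)`. -/
def VSet (M : MDP S A) (Bad : Set S) : Set S := (M.GoodSet Bad ∪ Bad)ᶜ

/-- `Pr_{σ,s}(GoodCyl(ρ)) := P_{σ,s}(ρ) · Pr_{σ_ρ, last(ρ)}(□¬Bad)`. -/
noncomputable def goodCyl (M : MDP S A) (σ : Strat S A) (s : S) (Bad : Set S) (ρ : FPath S A) :
    ℝ≥0∞ :=
  M.cylProb σ s ρ * M.prSafe (shiftStrat σ ρ.start ρ.steps) ρ.last Bad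

/-- Transition probabilities of the pruned MDP `M'` for safety. -/
noncomputable def probS' (M : MDP S A) (Bad : Set S) (s : S) (a : A) (s' : S) : ℝ≥0∞ :=
  if M.OptS Bad s a ∧ 0 < M.safeVal Bad s then
    M.prob s a s' * M.safeVal Bad s' / M.safeVal Bad s
  else 0

/-- `ρ` is a finite path of the pruned MDP `M'` (safety version). -/
def IsPathS' (M : MDP S A) (Bad : Set S) (ρ : FPath S A) : Prop :=
  M.IsPathFromPruned (M.safeVal Bad) (M.OptS Bad) ρ.start ρ.steps

/-- Cylinder probability `P'_{σ,s}(ρ)` in the pruned MDP `M'` (safety version). -/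
noncomputable def cylProbS' (M : MDP S A) (Bad : Set S) (σ : Strat S A) (s : S)
    (ρ : FPath S A) : ℝ≥0∞ :=
  cylProbP (M.probS' Bad) σ s ρ

end MDP

/-- `Reward_n(ρ) = ∑_{i<n} R(sᵢ, aᵢ)` for `ρ` starting at `s` with steps `steps`. -/
def rewardOf (R : S → A → ℝ) : S → List (A × S) → ℝ
  | _, [] => 0
  | s, (a, s') :: rest => R s a + rewardOf R s' rest

namespace MDP

variable [Fintype S] [Fintype A]

/-- `E'_{σ,s}(Reward_n)` in the pruned MDP `M'` (safety version). -/
noncomputable def expRewN' (M : MDP S A) (Bad : Set S) (R : S → A → ℝ) (σ : Strat S A)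
    (s : S) (n : ℕ) : ℝ :=
  ∑' ρ : {ρ : FPath S A // M.IsPathS' Bad ρ ∧ ρ.start = s ∧ ρ.length = n},
    (M.cylProbS' Bad σ s ρ.1).toReal * rewardOf R ρ.1.start ρ.1.steps

/-- `E'_{σ,s}(MP) := liminf_n (1/n)·E'_{σ,s}(Reward_n)`. -/
noncomputable def mp' (M : MDP S A) (Bad : Set S) (R : S → A → ℝ) (σ : Strat S A) (s : S) :
    ℝ :=
  Filter.atTop.liminf fun n : ℕ => M.expRewN' Bad R σ s n / n

/-- `E_{σ,s}(Reward_n | □¬Bad)`. -/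
noncomputable def condExpRewN (M : MDP S A) (Bad : Set S) (R : S → A → ℝ) (σ : Strat S A)
    (s : S) (n : ℕ) : ℝ :=
  (∑' ρ : {ρ : FPath S A // M.IsPath ρ ∧ ρ.start = s ∧ ρ.length = n},
    (M.goodCyl σ s Bad ρ.1).toReal * rewardOf R ρ.1.start ρ.1.steps) /
  (M.prSafe σ s Bad).toReal

/-- `E_{σ,s}(MP | □¬Bad) := liminf_n (1/n)·E_{σ,s}(Reward_n | □¬Bad)`. -/
noncomputable def condMP (M : MDP S A) (Bad : Set S) (R : S → A → ℝ) (σ : Strat S A)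
    (s : S) : ℝ :=
  Filter.atTop.liminf fun n : ℕ => M.condExpRewN Bad R σ s n / n

end MDP

/-! Fix a strategy `g s'` for every state `s'`. The strategy that plays `a` at `s` and then follows
`g s'` from the reached state `s'` avoids `Bad` from `s` with probability at least
`∑ s', P(s, a, s') · Pr_{g s', s'}(□¬Bad)`, since every safe path of length `n` from `s'` under
`g s'` extends by the step `(a, s')` to a safe path of length `n + 1` from `s`. The sum over
`s'` is finite, so the suprema over the `g s'` can be taken independently of each other, which
turns these bounds into the bound by `Val`. -/

theorem ENNReal.finsetSum_iSup_eq_iSup_pi {ι κ : Type*} [Nonempty κ] (t : Finset ι)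
    (F : ι → κ → ℝ≥0∞) : ∑ i ∈ t, ⨆ k, F i k = ⨆ g : ι → κ, ∑ i ∈ t, F i (g i) := by
  have hF : ∀ i, ⨆ k, F i k = ⨆ g : ι → κ, F i (g i) := fun i =>
    ((Function.surjective_eval (β := fun _ : ι => κ) i).iSup_comp (F i)).symm
  rw [Finset.sum_congr rfl fun i _ => hF i]
  refine ENNReal.finsetSum_iSup fun g h =>
    ⟨fun i => if F i (g i) ≤ F i (h i) then h i else g i, fun i => ?_⟩
  dsimp only
  split_ifs with hle
  · exact ⟨hle, le_rfl⟩
  · exact ⟨le_rfl, (not_le.mp hle).le⟩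

theorem lastState_append (s : S) (l₁ l₂ : List (A × S)) :
    lastState s (l₁ ++ l₂) = lastState (lastState s l₁) l₂ := by
  induction l₁ generalizing s with
  | nil => rfl
  | cons x l ih => exact ih x.2

theorem wtP_congr {p : S → A → S → ℝ≥0∞} {σ τ : Strat S A} {s₀ : S} (h : σ s₀ = τ s₀)
    (pre rest : List (A × S)) : wtP p σ s₀ pre rest = wtP p τ s₀ pre rest := by
  induction rest generalizing pre with
  | nil => simp only [wtP]
  | cons x rest ih => rw [wtP, wtP, h, ih]

theorem wtP_append (p : S → A → S → ℝ≥0∞) (σ : Strat S A) (s₀ : S)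
    (pre mid rest : List (A × S)) :
    wtP p σ s₀ (pre ++ mid) rest =
      wtP p (shiftStrat σ s₀ pre) (lastState s₀ pre) mid rest := by
  induction rest generalizing mid with
  | nil => simp only [wtP]
  | cons x rest ih =>
    rw [wtP, wtP, List.append_assoc, ih, lastState_append]
    rfl

theorem cylProbP_congr {p : S → A → S → ℝ≥0∞} {σ τ : Strat S A} {s : S} (h : σ s = τ s)
    (ρ : FPath S A) : cylProbP p σ s ρ = cylProbP p τ s ρ := by
  unfold cylProbP
  split_ifs with hρ
  · rw [hρ, wtP_congr h]
  · rfl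

theorem cylProbP_cons (p : S → A → S → ℝ≥0∞) (σ : Strat S A) (s : S) (a : A) (s' : S)
    (steps : List (A × S)) :
    cylProbP p σ s ⟨s, (a, s') :: steps⟩ =
      σ s [] a * p s a s' * cylProbP p (shiftStrat σ s [(a, s')]) s' ⟨s', steps⟩ := by
  simp only [cylProbP, if_true]
  rw [wtP, List.nil_append]
  exact congrArg _ (wtP_append p σ s [(a, s')] [] steps)

noncomputable def actThenFollow (s : S) (a : A) (g : S → Strat S A) : Strat S A :=
  fun s₀ steps =>
    if s₀ = s then
      match steps with
      | [] => fun a' => if a' = a then 1 else 0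
      | (_, s') :: rest => g s' s' rest
    else g s₀ s₀ steps

namespace MDP

variable [Fintype S] [Fintype A] (M : MDP S A)

theorem legal_of_prob_pos {s : S} {a : A} {s' : S} (h : 0 < M.prob s a s') : M.legal s a := by
  unfold prob at h
  unfold legal
  cases hP : M.P s a <;> simp_all

theorem sum_prob_eq_one {s : S} {a : A} (ha : M.legal s a) : ∑ s', M.prob s a s' = 1 := by
  obtain ⟨d, hd⟩ := Option.isSome_iff_exists.mp ha
  simp only [prob, hd, Option.elim_some]
  rw [← ENNReal.ofNNReal_finsetSum, M.sum_one s a d hd, ENNReal.coe_one]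

theorem exists_isStrategy : ∃ σ, M.IsStrategy σ := by
  choose f hf using M.exists_legal
  refine ⟨fun s₀ steps a => if a = f (lastState s₀ steps) then 1 else 0,
    fun s steps _ => ⟨by simp, fun a ha => ?_⟩⟩
  obtain rfl : a = f (lastState s steps) := by by_contra hne; simp [hne] at ha
  exact hf _

def safePaths (s : S) (Bad : Set S) (n : ℕ) : Set (FPath S A) :=
  {ρ | M.IsPath ρ ∧ ρ.start = s ∧ ρ.length = n ∧ ∀ x ∈ ρ.states, x ∉ Bad}

theorem safeN_eq_tsum_indicator (σ : Strat S A) (s : S) (Bad : Set S) (n : ℕ) :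
    M.safeN σ s Bad n = ∑' ρ, (M.safePaths s Bad n).indicator (M.cylProb σ s) ρ :=
  tsum_subtype (M.safePaths s Bad n) (M.cylProb σ s)

theorem safeN_congr {σ τ : Strat S A} {s : S} (h : σ s = τ s) (Bad : Set S) (n : ℕ) :
    M.safeN σ s Bad n = M.safeN τ s Bad n := by
  simp only [safeN, cylProb, cylProbP_congr h]

theorem safeN_zero (σ : Strat S A) (s : S) (Bad : Set S) :
    M.safeN σ s Bad 0 = if s ∈ Bad then 0 else 1 := by
  have hsupp : ∀ ρ ∈ M.safePaths s Bad 0, ρ = ⟨s, []⟩ := by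
    rintro ⟨st, steps⟩ ⟨-, rfl, hlen, -⟩
    simp only [FPath.length, List.length_eq_zero_iff] at hlen
    subst hlen
    rfl
  rw [safeN_eq_tsum_indicator, tsum_eq_single ⟨s, []⟩ fun ρ hρ =>
    Set.indicator_of_notMem (fun h => hρ (hsupp ρ h)) _]
  split_ifs with hs
  · exact Set.indicator_of_notMem (fun h => h.2.2.2 s (List.mem_cons_self ..) hs) _
  · have hmem : ⟨s, []⟩ ∈ M.safePaths s Bad 0 :=
      ⟨trivial, rfl, rfl, by simpa [FPath.states] using hs⟩
    rw [Set.indicator_of_mem hmem]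
    simp [cylProb, cylProbP, wtP]

theorem prSafe_le_one (σ : Strat S A) (s : S) (Bad : Set S) : M.prSafe σ s Bad ≤ 1 :=
  (iInf_le _ 0).trans (by rw [safeN_zero]; split_ifs <;> simp)

theorem sum_mul_safeN_shiftStrat_le_safeN_succ (σ : Strat S A) {s : S} {Bad : Set S}
    (hs : s ∉ Bad) (a : A) (n : ℕ) :
    ∑ s', σ s [] a * M.prob s a s' * M.safeN (shiftStrat σ s [(a, s')]) s' Bad n ≤
      M.safeN σ s Bad (n + 1) := by
  let f : (Σ s', M.safePaths s' Bad n) → ℝ≥0∞ := fun z =>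
    σ s [] a * M.prob s a z.1 * M.cylProb (shiftStrat σ s [(a, z.1)]) z.1 z.2
  let extend : (Σ s', M.safePaths s' Bad n) → FPath S A := fun z =>
    ⟨s, (a, z.1) :: z.2.1.steps⟩
  have extend_injective : Function.Injective extend := by
    rintro ⟨s₁, ⟨st₁, steps₁⟩, h₁⟩ ⟨s₂, ⟨st₂, steps₂⟩, h₂⟩ h
    simp only [extend, FPath.mk.injEq, List.cons.injEq, Prod.mk.injEq, true_and] at h
    obtain ⟨rfl, rfl⟩ := h
    obtain rfl : st₁ = st₂ := h₁.2.1.trans h₂.2.1.symm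
    rfl
  have f_le : ∀ z, f z ≤ (M.safePaths s Bad (n + 1)).indicator (M.cylProb σ s) (extend z) := by
    rintro ⟨s', ⟨st, steps⟩, hpath, rfl, hlen, hsafe⟩
    rcases eq_zero_or_pos (M.prob s a st) with hzero | hpos
    · simp [f, hzero]
    · have hmem :
          extend ⟨st, ⟨st, steps⟩, hpath, rfl, hlen, hsafe⟩ ∈ M.safePaths s Bad (n + 1) := by
        refine ⟨⟨M.legal_of_prob_pos hpos, hpos, hpath⟩, rfl, congrArg (· + 1) hlen, ?_⟩
        simp only [extend, FPath.states, List.map_cons, List.mem_cons, forall_eq_or_imp]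
        exact ⟨hs, by simpa [FPath.states] using hsafe⟩
      rw [Set.indicator_of_mem hmem]
      exact (cylProbP_cons _ _ _ _ _ _).ge
  calc ∑ s', σ s [] a * M.prob s a s' * M.safeN (shiftStrat σ s [(a, s')]) s' Bad n
      = ∑' (s') (ρ : M.safePaths s' Bad n), f ⟨s', ρ⟩ := by
        rw [← tsum_fintype (L := .unconditional _)]
        simp only [safeN, ← ENNReal.tsum_mul_left]
        rfl
    _ = ∑' z, f z := (ENNReal.tsum_sigma' f).symm
    _ ≤ ∑' z, (M.safePaths s Bad (n + 1)).indicator (M.cylProb σ s) (extend z) :=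
        ENNReal.tsum_le_tsum f_le
    _ ≤ ∑' ρ, (M.safePaths s Bad (n + 1)).indicator (M.cylProb σ s) ρ :=
        ENNReal.tsum_comp_le_tsum_of_injective extend_injective _
    _ = M.safeN σ s Bad (n + 1) := (M.safeN_eq_tsum_indicator σ s Bad (n + 1)).symm

theorem isStrategy_actThenFollow {s : S} {a : A} (ha : M.legal s a) {g : S → Strat S A}
    (hg : ∀ s', M.IsStrategy (g s')) : M.IsStrategy (actThenFollow s a g) := by
  intro s₀ steps hpath
  by_cases h : s₀ = s
  · subst h
    cases steps with
    | nil =>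
      refine ⟨by simp [actThenFollow], fun a' hpos => ?_⟩
      obtain rfl : a' = a := by by_contra hne; simp [actThenFollow, hne] at hpos
      exact ha
    | cons x rest =>
      obtain ⟨b, s'⟩ := x
      simpa [actThenFollow, lastState] using hg s' s' rest hpath.2.2
  · simpa [actThenFollow, h] using hg s₀ s₀ steps hpath

theorem sum_prob_mul_prSafe_le_prSafe_actThenFollow {s : S} {Bad : Set S} (hs : s ∉ Bad)
    {a : A} (ha : M.legal s a) (g : S → Strat S A) :
    ∑ s', M.prob s a s' * M.prSafe (g s') s' Bad ≤ M.prSafe (actThenFollow s a g) s Bad := by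
  refine le_iInf fun n => ?_
  cases n with
  | zero =>
    calc ∑ s', M.prob s a s' * M.prSafe (g s') s' Bad
        ≤ ∑ s', M.prob s a s' * 1 := by gcongr; exact M.prSafe_le_one _ _ _
      _ = 1 := by simp only [mul_one, M.sum_prob_eq_one ha]
      _ = M.safeN (actThenFollow s a g) s Bad 0 := by rw [safeN_zero, if_neg hs]
  | succ n =>
    have hfirst : actThenFollow s a g s [] a = 1 := by simp [actThenFollow]
    have hshift : ∀ s', shiftStrat (actThenFollow s a g) s [(a, s')] s' = g s' s' := by
      intro s'
      funext steps a'
      show actThenFollow s a g s ((a, s') :: steps) a' = _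
      simp [actThenFollow]
    refine le_trans ?_ (M.sum_mul_safeN_shiftStrat_le_safeN_succ _ hs a n)
    refine Finset.sum_le_sum fun s' _ => ?_
    rw [hfirst, one_mul, M.safeN_congr (hshift s')]
    gcongr
    exact iInf_le _ n

theorem sum_prob_mul_prSafe_le_safeVal {s : S} {Bad : Set S} (hs : s ∉ Bad) {a : A}
    (ha : M.legal s a) {g : S → Strat S A} (hg : ∀ s', M.IsStrategy (g s')) :
    ∑ s', M.prob s a s' * M.prSafe (g s') s' Bad ≤ M.safeVal Bad s :=
  (M.sum_prob_mul_prSafe_le_prSafe_actThenFollow hs ha g).trans <|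
    le_iSup₂ (f := fun σ (_ : M.IsStrategy σ) => M.prSafe σ s Bad) _
      (M.isStrategy_actThenFollow ha hg)

theorem safeVal_eq_iSup_subtype (Bad : Set S) (s : S) :
    M.safeVal Bad s = ⨆ σ : {σ // M.IsStrategy σ}, M.prSafe σ s Bad :=
  iSup_subtype'

end MDP

theorem stmt7_general {S : Type u} {A : Type v} [Fintype S] [Fintype A]
    (M : MDP S A) (Bad : Set S)
    (s : S) (hs : s ∉ Bad) (a : A) (ha : M.legal s a) :
    (∑ s' : S, M.prob s a s' * M.safeVal Bad s') ≤ M.safeVal Bad s := by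
  have : Nonempty {σ // M.IsStrategy σ} := nonempty_subtype.mpr M.exists_isStrategy
  calc ∑ s', M.prob s a s' * M.safeVal Bad s'
      = ∑ s', ⨆ σ : {σ // M.IsStrategy σ}, M.prob s a s' * M.prSafe σ s' Bad := by
        simp only [M.safeVal_eq_iSup_subtype, ENNReal.mul_iSup]
    _ = ⨆ g : S → {σ // M.IsStrategy σ}, ∑ s', M.prob s a s' * M.prSafe (g s') s' Bad :=
        ENNReal.finsetSum_iSup_eq_iSup_pi _ _
    _ ≤ M.safeVal Bad s :=
        iSup_le fun g => M.sum_prob_mul_prSafe_le_safeVal hs ha fun s' => (g s').2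

/-- for every `s ∈ S \ Bad` and every action `a` legal at `s`,
`Val(s) ≥ ∑_{s'} (P s a)(s')·Val(s')` (safety value). -/
theorem stmt7 {S : Type u} {A : Type v} [Fintype S] [Fintype A] [Nonempty S] [Nonempty A]
    (M : MDP S A) (Bad : Set S) (hBad : M.SinkSet Bad)
    (s : S) (hs : s ∉ Bad) (a : A) (ha : M.legal s a) :
    (∑ s' : S, M.prob s a s' * M.safeVal Bad s') ≤ M.safeVal Bad s :=
  stmt7_general M Bad s hs a ha
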